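/- arXiv:2307.08868 — 2 statements merged into one kernel-verified Lean document; each statement's English description precedes it below -/
import Mathlib

section
/- Let n ≥ 2, let (θ_{i,j})_{i,j≥1} be a coagulation kernel satisfying (K1) and (K3), and let f^n = (f_i^n)_{1≤i≤n} be the nonnegative global solution of the truncated RBK system with nonnegative initial data. Then for every t ∈ (0,∞), Σ_{i=1}^{n} i f_i^n(t) ≤ (2/R) ( Σ_{i=1}^{n} f_i^{n,in} )^{1/2} t^{−1/2}. -/
open MeasureTheory Finset Filter

/-- `IsTruncRBKOn θ n I f` : the family `(f i)_{1 ≤ i ≤ n}` solves the truncated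
Redner–Ben-Avraham–Kahng coagulation system of size `n` with kernel `θ` on the set `I`:
`df_i/dt = ∑_{j=1}^{n-i} θ_{i+j,j} f_{i+j} f_j − ∑_{j=1}^{n} θ_{i,j} f_i f_j`. -/
def IsTruncRBKOn (θ : ℕ → ℕ → ℝ) (n : ℕ) (I : Set ℝ) (f : ℕ → ℝ → ℝ) : Prop :=
  ∀ i ∈ Finset.Icc 1 n, ∀ t ∈ I,
    HasDerivWithinAt (f i)
      ((∑ j ∈ Finset.Icc 1 (n - i), θ (i + j) j * f (i + j) t * f j t)
        - ∑ j ∈ Finset.Icc 1 n, θ i j * f i t * f j t) I t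

/-!
The first moment `M₁ = ∑ i fᵢ` is nonincreasing: after reindexing, the gain term weighs the
collision of sizes `k > j` by `k - j` and the loss term by `k`. For the zeroth moment `M₀ = ∑ fᵢ`,
symmetry of `θ` makes the gain at most half the loss, so
`M₀' ≤ -½ ∑ θᵢⱼ fᵢ fⱼ ≤ -½ (∑ ωᵢ fᵢ)² ≤ -(R²/2) M₁²`. Since `M₁` decreases,
`M₀' ≤ -(R²/2) M₁(t)²` on `[0, t]`, and integrating gives `(R²/2) M₁(t)² t ≤ M₀(0) = ∑ fᵢⁱⁿ`.
-/

theorem sum_Icc_sum_Icc_sub_eq_sum_filter_lt {M : Type*} [AddCommMonoid M] (n : ℕ)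
    (G : ℕ → ℕ → M) :
    ∑ i ∈ Icc 1 n, ∑ j ∈ Icc 1 (n - i), G (i + j) j
      = ∑ k ∈ Icc 1 n, ∑ j ∈ Icc 1 n with j < k, G k j := by
  calc ∑ i ∈ Icc 1 n, ∑ j ∈ Icc 1 (n - i), G (i + j) j
      = ∑ j ∈ Icc 1 n, ∑ i ∈ Icc 1 (n - j), G (i + j) j :=
        sum_comm' fun _ _ => by simp only [mem_Icc]; omega
    _ = ∑ j ∈ Icc 1 n, ∑ k ∈ Icc (1 + j) (n - j + j), G k j := by
        simp only [← map_add_right_Icc, sum_map]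
        rfl
    _ = _ := sum_comm' fun _ _ => by simp only [mem_Icc, mem_filter]; omega

theorem two_mul_sum_sum_filter_lt_le {ι : Type*} [LinearOrder ι] {s : Finset ι}
    {h : ι → ι → ℝ} (hsymm : ∀ i ∈ s, ∀ j ∈ s, h i j = h j i) (hdiag : ∀ i ∈ s, 0 ≤ h i i) :
    2 * ∑ i ∈ s, ∑ j ∈ s with j < i, h i j ≤ ∑ i ∈ s, ∑ j ∈ s, h i j := by
  have hswap : ∑ i ∈ s, ∑ j ∈ s with j < i, h i j = ∑ i ∈ s, ∑ j ∈ s with i < j, h i j := by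
    rw [sum_comm' (t' := s) (s' := fun j => s.filter (j < ·))
      (by intros; simp only [mem_filter]; tauto)]
    exact sum_congr rfl fun i hi => sum_congr rfl fun j hj => hsymm j (mem_filter.1 hj).1 i hi
  have hsplit : ∀ i ∈ s,
      ∑ j ∈ s with j < i, h i j + ∑ j ∈ s with i < j, h i j ≤ ∑ j ∈ s, h i j := by
    intro i hi
    rw [← sum_filter_add_sum_filter_not s (· < i)]
    refine add_le_add le_rfl (sum_le_sum_of_subset_of_nonneg ?_ fun j hj hj' => ?_)
    · exact monotone_filter_right s fun j _ hij => lt_asymm hij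
    · obtain rfl : j = i := by
        simp only [mem_filter, not_lt, not_and] at hj hj'
        exact le_antisymm (hj' hj.1) hj.2
      exact hdiag j hi
  calc 2 * ∑ i ∈ s, ∑ j ∈ s with j < i, h i j
      = ∑ i ∈ s, (∑ j ∈ s with j < i, h i j + ∑ j ∈ s with i < j, h i j) := by
        rw [sum_add_distrib, ← hswap, two_mul]
    _ ≤ _ := sum_le_sum hsplit

theorem image_sub_le_mul_sub_of_hasDerivWithinAt_Ici {φ φ' : ℝ → ℝ} {a x y C : ℝ}
    (hφ : ∀ s ∈ Set.Ici a, HasDerivWithinAt φ (φ' s) (Set.Ici a) s)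
    (hle : ∀ s ∈ Set.Ioo x y, φ' s ≤ C) (hax : a ≤ x) (hxy : x ≤ y) :
    φ y - φ x ≤ C * (y - x) := by
  have hsub : Set.Icc x y ⊆ Set.Ici a := fun s hs => hax.trans hs.1
  have hderiv : ∀ s ∈ Set.Ioo x y, HasDerivAt φ (φ' s) s := fun s hs =>
    (hφ s (hsub (Set.Ioo_subset_Icc_self hs))).hasDerivAt (Ici_mem_nhds (hax.trans_lt hs.1))
  refine (convex_Icc x y).image_sub_le_mul_sub_of_deriv_le
    (fun s hs => (hφ s (hsub hs)).continuousWithinAt.mono hsub) ?_ ?_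
    x (Set.left_mem_Icc.2 hxy) y (Set.right_mem_Icc.2 hxy) hxy
  · rw [interior_Icc]
    exact fun s hs => (hderiv s hs).differentiableAt.differentiableWithinAt
  · rw [interior_Icc]
    exact fun s hs => (hderiv s hs).deriv ▸ hle s hs

/-- `IsTruncRBKOn θ n I f` unfolds to `HasDerivWithinAt (f i) (truncRBKRate θ n (f · t) i) I t`. -/
def truncRBKRate (θ : ℕ → ℕ → ℝ) (n : ℕ) (g : ℕ → ℝ) (i : ℕ) : ℝ :=
  (∑ j ∈ Icc 1 (n - i), θ (i + j) j * g (i + j) * g j) - ∑ j ∈ Icc 1 n, θ i j * g i * g j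

section Rate

variable {θ : ℕ → ℕ → ℝ} {n : ℕ} {g : ℕ → ℝ}

theorem sum_mul_truncRBKRate_nonpos (hθ : ∀ i ∈ Icc 1 n, ∀ j ∈ Icc 1 n, 0 ≤ θ i j)
    (hg : ∀ i ∈ Icc 1 n, 0 ≤ g i) :
    ∑ i ∈ Icc 1 n, (i : ℝ) * truncRBKRate θ n g i ≤ 0 := by
  have hterm : ∀ k ∈ Icc 1 n, ∀ j ∈ Icc 1 n, 0 ≤ θ k j * g k * g j := fun k hk j hj =>
    mul_nonneg (mul_nonneg (hθ k hk j hj) (hg k hk)) (hg j hj)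
  have hgain : ∑ i ∈ Icc 1 n, ∑ j ∈ Icc 1 (n - i), (i : ℝ) * (θ (i + j) j * g (i + j) * g j)
      = ∑ k ∈ Icc 1 n, ∑ j ∈ Icc 1 n with j < k, ((k - j : ℕ) : ℝ) * (θ k j * g k * g j) := by
    rw [← sum_Icc_sum_Icc_sub_eq_sum_filter_lt]
    simp only [Nat.add_sub_cancel]
  simp only [truncRBKRate, mul_sub, mul_sum]
  rw [sum_sub_distrib, sub_nonpos, hgain]
  refine sum_le_sum fun k hk => ?_
  calc ∑ j ∈ Icc 1 n with j < k, ((k - j : ℕ) : ℝ) * (θ k j * g k * g j)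
      ≤ ∑ j ∈ Icc 1 n with j < k, (k : ℝ) * (θ k j * g k * g j) :=
        sum_le_sum fun j hj => mul_le_mul_of_nonneg_right (Nat.cast_le.2 (Nat.sub_le k j))
          (hterm k hk j (mem_filter.1 hj).1)
    _ ≤ ∑ j ∈ Icc 1 n, (k : ℝ) * (θ k j * g k * g j) :=
        sum_le_sum_of_subset_of_nonneg (filter_subset _ _) fun j hj _ =>
          mul_nonneg (Nat.cast_nonneg k) (hterm k hk j hj)

theorem sum_truncRBKRate_le (hsymm : ∀ i ∈ Icc 1 n, ∀ j ∈ Icc 1 n, θ i j = θ j i)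
    (hθ : ∀ i ∈ Icc 1 n, 0 ≤ θ i i) :
    ∑ i ∈ Icc 1 n, truncRBKRate θ n g i
      ≤ -(∑ i ∈ Icc 1 n, ∑ j ∈ Icc 1 n, θ i j * g i * g j) / 2 := by
  have hhalf := two_mul_sum_sum_filter_lt_le (s := Icc 1 n) (h := fun i j => θ i j * g i * g j)
    (fun i hi j hj => by rw [hsymm i hi j hj]; ring)
    (fun i hi => by nlinarith [hθ i hi, mul_self_nonneg (g i)])
  simp only [truncRBKRate]
  rw [sum_sub_distrib, sum_Icc_sum_Icc_sub_eq_sum_filter_lt n fun k j => θ k j * g k * g j]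
  linarith

end Rate

theorem sq_mul_sum_mul_le_sum_sum {θ : ℕ → ℕ → ℝ} {ω : ℕ → ℝ} {κ : ℕ → ℕ → ℝ} {R : ℝ}
    {n : ℕ} {g : ℕ → ℝ}
    (hK1 : ∀ i j : ℕ, 1 ≤ i → 1 ≤ j → θ i j = ω i * ω j + κ i j)
    (hκ_nonneg : ∀ i j : ℕ, 1 ≤ i → 1 ≤ j → 0 ≤ κ i j)
    (hR : 0 ≤ R) (hωR : ∀ i : ℕ, 1 ≤ i → R * i ≤ ω i) (hg : ∀ i ∈ Icc 1 n, 0 ≤ g i) :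
    (R * ∑ i ∈ Icc 1 n, (i : ℝ) * g i) ^ 2
      ≤ ∑ i ∈ Icc 1 n, ∑ j ∈ Icc 1 n, θ i j * g i * g j := by
  have hlow : 0 ≤ R * ∑ i ∈ Icc 1 n, (i : ℝ) * g i :=
    mul_nonneg hR (sum_nonneg fun i hi => mul_nonneg (Nat.cast_nonneg i) (hg i hi))
  have hω : R * ∑ i ∈ Icc 1 n, (i : ℝ) * g i ≤ ∑ i ∈ Icc 1 n, ω i * g i := by
    rw [mul_sum]
    refine sum_le_sum fun i hi => ?_
    rw [← mul_assoc]
    exact mul_le_mul_of_nonneg_right (hωR i (mem_Icc.1 hi).1) (hg i hi)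
  calc (R * ∑ i ∈ Icc 1 n, (i : ℝ) * g i) ^ 2
      ≤ (∑ i ∈ Icc 1 n, ω i * g i) * ∑ j ∈ Icc 1 n, ω j * g j := by
        rw [sq]; exact mul_le_mul hω hω hlow (hlow.trans hω)
    _ ≤ ∑ i ∈ Icc 1 n, ∑ j ∈ Icc 1 n, θ i j * g i * g j := by
        rw [sum_mul_sum]
        refine sum_le_sum fun i hi => sum_le_sum fun j hj => ?_
        have hi1 := (mem_Icc.1 hi).1
        have hj1 := (mem_Icc.1 hj).1
        rw [hK1 i j hi1 hj1]
        nlinarith [mul_nonneg (mul_nonneg (hκ_nonneg i j hi1 hj1) (hg i hi)) (hg j hj)]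

theorem le_two_div_mul_sqrt_mul_inv_sqrt {x R F t : ℝ} (hx : 0 ≤ x) (hR : 0 < R) (ht : 0 < t)
    (h : R ^ 2 / 2 * x ^ 2 * t ≤ F) :
    x ≤ 2 / R * Real.sqrt F * (Real.sqrt t)⁻¹ := by
  have hF : 0 ≤ F := le_trans (by positivity) h
  rw [← pow_le_pow_iff_left₀ hx (by positivity) two_ne_zero, mul_pow, mul_pow, div_pow, inv_pow,
    Real.sq_sqrt hF, Real.sq_sqrt ht.le, ← div_eq_mul_inv, le_div_iff₀ ht,
    div_mul_eq_mul_div, le_div_iff₀ (by positivity)]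
  nlinarith [sq_nonneg x, sq_nonneg R]

theorem kernel_nonneg_of_K1_K3 {θ : ℕ → ℕ → ℝ} {ω : ℕ → ℝ} {κ : ℕ → ℕ → ℝ} {R : ℝ} {n : ℕ}
    (hK1 : ∀ i j : ℕ, 1 ≤ i → 1 ≤ j → θ i j = ω i * ω j + κ i j)
    (hκ_nonneg : ∀ i j : ℕ, 1 ≤ i → 1 ≤ j → 0 ≤ κ i j)
    (hR : 0 ≤ R) (hωR : ∀ i : ℕ, 1 ≤ i → R * i ≤ ω i) :
    ∀ i ∈ Icc 1 n, ∀ j ∈ Icc 1 n, 0 ≤ θ i j := fun i hi j hj => by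
  have hi1 := (mem_Icc.1 hi).1
  have hj1 := (mem_Icc.1 hj).1
  have hω : ∀ k : ℕ, 1 ≤ k → 0 ≤ ω k := fun k hk => (by positivity : 0 ≤ R * k).trans (hωR k hk)
  rw [hK1 i j hi1 hj1]
  exact add_nonneg (mul_nonneg (hω i hi1) (hω j hj1)) (hκ_nonneg i j hi1 hj1)

namespace IsTruncRBKOn

variable {θ : ℕ → ℕ → ℝ} {n : ℕ} {f : ℕ → ℝ → ℝ}

theorem hasDerivWithinAt_sum {I : Set ℝ} (hf : IsTruncRBKOn θ n I f) {t : ℝ} (ht : t ∈ I) :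
    HasDerivWithinAt (fun s => ∑ i ∈ Icc 1 n, f i s)
      (∑ i ∈ Icc 1 n, truncRBKRate θ n (f · t) i) I t :=
  HasDerivWithinAt.fun_sum fun i hi => hf i hi t ht

theorem hasDerivWithinAt_sum_mul {I : Set ℝ} (hf : IsTruncRBKOn θ n I f) (w : ℕ → ℝ) {t : ℝ}
    (ht : t ∈ I) :
    HasDerivWithinAt (fun s => ∑ i ∈ Icc 1 n, w i * f i s)
      (∑ i ∈ Icc 1 n, w i * truncRBKRate θ n (f · t) i) I t :=
  HasDerivWithinAt.fun_sum fun i hi => (hf i hi t ht).const_mul (w i)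

theorem sum_mul_le_of_le (hf : IsTruncRBKOn θ n (Set.Ici 0) f)
    (hf_nonneg : ∀ i ∈ Icc 1 n, ∀ t ∈ Set.Ici (0 : ℝ), 0 ≤ f i t)
    (hθ : ∀ i ∈ Icc 1 n, ∀ j ∈ Icc 1 n, 0 ≤ θ i j) {s t : ℝ}
    (hs : 0 ≤ s) (hst : s ≤ t) :
    ∑ i ∈ Icc 1 n, (i : ℝ) * f i t ≤ ∑ i ∈ Icc 1 n, (i : ℝ) * f i s := by
  have := image_sub_le_mul_sub_of_hasDerivWithinAt_Ici
    (fun u hu => hf.hasDerivWithinAt_sum_mul (fun i => (i : ℝ)) hu)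
    (fun u hu => sum_mul_truncRBKRate_nonpos hθ fun i hi => hf_nonneg i hi u (hs.trans hu.1.le))
    hs hst
  linarith

theorem sum_sub_sum_le {ω : ℕ → ℝ} {κ : ℕ → ℕ → ℝ} {R : ℝ} (hf : IsTruncRBKOn θ n (Set.Ici 0) f)
    (hf_nonneg : ∀ i ∈ Icc 1 n, ∀ t ∈ Set.Ici (0 : ℝ), 0 ≤ f i t)
    (hθ_symm : ∀ i j : ℕ, 1 ≤ i → 1 ≤ j → θ i j = θ j i)
    (hK1 : ∀ i j : ℕ, 1 ≤ i → 1 ≤ j → θ i j = ω i * ω j + κ i j)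
    (hκ_nonneg : ∀ i j : ℕ, 1 ≤ i → 1 ≤ j → 0 ≤ κ i j)
    (hR : 0 ≤ R) (hωR : ∀ i : ℕ, 1 ≤ i → R * i ≤ ω i) {t : ℝ} (ht : 0 ≤ t) :
    ∑ i ∈ Icc 1 n, f i t - ∑ i ∈ Icc 1 n, f i 0
      ≤ -(R ^ 2 / 2 * (∑ i ∈ Icc 1 n, (i : ℝ) * f i t) ^ 2) * t := by
  have hθ := kernel_nonneg_of_K1_K3 (n := n) hK1 hκ_nonneg hR hωR
  have hM1_nonneg : 0 ≤ R * ∑ i ∈ Icc 1 n, (i : ℝ) * f i t :=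
    mul_nonneg hR (sum_nonneg fun i hi => mul_nonneg (Nat.cast_nonneg i) (hf_nonneg i hi t ht))
  have hrate : ∀ s ∈ Set.Ioo 0 t, ∑ i ∈ Icc 1 n, truncRBKRate θ n (f · s) i
      ≤ -(R ^ 2 / 2 * (∑ i ∈ Icc 1 n, (i : ℝ) * f i t) ^ 2) := fun s hs => by
    have hg : ∀ i ∈ Icc 1 n, 0 ≤ f i s := fun i hi => hf_nonneg i hi s hs.1.le
    have hhalf := sum_truncRBKRate_le (g := (f · s))
      (fun i hi j hj => hθ_symm i j (mem_Icc.1 hi).1 (mem_Icc.1 hj).1) fun i hi => hθ i hi i hi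
    have hkernel := sq_mul_sum_mul_le_sum_sum hK1 hκ_nonneg hR hωR hg
    have hmono : (R * ∑ i ∈ Icc 1 n, (i : ℝ) * f i t) ^ 2
        ≤ (R * ∑ i ∈ Icc 1 n, (i : ℝ) * f i s) ^ 2 :=
      pow_le_pow_left₀ hM1_nonneg (mul_le_mul_of_nonneg_left
        (hf.sum_mul_le_of_le hf_nonneg hθ hs.1.le hs.2.le) hR) 2
    linarith
  simpa using image_sub_le_mul_sub_of_hasDerivWithinAt_Ici
    (fun s hs => hf.hasDerivWithinAt_sum hs) hrate le_rfl ht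

end IsTruncRBKOn

theorem truncRBK_mass_decay_general
    (θ : ℕ → ℕ → ℝ) (ω : ℕ → ℝ) (κ : ℕ → ℕ → ℝ)
    (hθ_symm : ∀ i j : ℕ, 1 ≤ i → 1 ≤ j → θ i j = θ j i)
    -- (K1)
    (hK1 : ∀ i j : ℕ, 1 ≤ i → 1 ≤ j → θ i j = ω i * ω j + κ i j)
    (hκ_nonneg : ∀ i j : ℕ, 1 ≤ i → 1 ≤ j → 0 ≤ κ i j)
    -- (K3)
    (R : ℝ) (hR : 0 < R)
    (hωR : ∀ i : ℕ, 1 ≤ i → R * i ≤ ω i)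
    (n : ℕ)
    (fin : ℕ → ℝ)
    (f : ℕ → ℝ → ℝ) (hf : IsTruncRBKOn θ n (Set.Ici 0) f)
    (hinit : ∀ i ∈ Finset.Icc 1 n, f i 0 = fin i)
    (hf_nonneg : ∀ i ∈ Finset.Icc 1 n, ∀ t ∈ Set.Ici (0:ℝ), 0 ≤ f i t)
    (t : ℝ) (ht : 0 < t) :
    ∑ i ∈ Finset.Icc 1 n, (i : ℝ) * f i t
      ≤ (2 / R) * Real.sqrt (∑ i ∈ Finset.Icc 1 n, fin i) * (Real.sqrt t)⁻¹ := by
  have hdecay := hf.sum_sub_sum_le hf_nonneg hθ_symm hK1 hκ_nonneg hR.le hωR ht.le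
  have hM0_nonneg : 0 ≤ ∑ i ∈ Icc 1 n, f i t := sum_nonneg fun i hi => hf_nonneg i hi t ht.le
  rw [sum_congr rfl hinit] at hdecay
  refine le_two_div_mul_sqrt_mul_inv_sqrt
    (sum_nonneg fun i hi => mul_nonneg (Nat.cast_nonneg i) (hf_nonneg i hi t ht.le)) hR ht ?_
  linarith

/-- Under (K1) and (K3) (`ω_i ≥ R i`, `κ_{i,j} ≤ A ω_i ω_j`), the nonnegative
global solution of the truncated RBK system satisfies, for every `t > 0`,
`∑_{i=1}^n i f_i(t) ≤ (2/R) (∑_{i=1}^n fin_i)^{1/2} t^{−1/2}`. -/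
theorem truncRBK_mass_decay
    (θ : ℕ → ℕ → ℝ) (ω : ℕ → ℝ) (κ : ℕ → ℕ → ℝ)
    (hθ_symm : ∀ i j : ℕ, 1 ≤ i → 1 ≤ j → θ i j = θ j i)
    -- (K1)
    (hK1 : ∀ i j : ℕ, 1 ≤ i → 1 ≤ j → θ i j = ω i * ω j + κ i j)
    (hω_nonneg : ∀ i : ℕ, 1 ≤ i → 0 ≤ ω i)
    (hκ_nonneg : ∀ i j : ℕ, 1 ≤ i → 1 ≤ j → 0 ≤ κ i j)
    (hκ_symm : ∀ i j : ℕ, 1 ≤ i → 1 ≤ j → κ i j = κ j i)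
    -- (K3)
    (R A : ℝ) (hR : 0 < R) (hA : 0 < A)
    (hωR : ∀ i : ℕ, 1 ≤ i → R * i ≤ ω i)
    (hκA : ∀ i j : ℕ, 1 ≤ i → 1 ≤ j → κ i j ≤ A * (ω i * ω j))
    (n : ℕ) (hn : 2 ≤ n)
    (fin : ℕ → ℝ) (hfin : ∀ i ∈ Finset.Icc 1 n, 0 ≤ fin i)
    (f : ℕ → ℝ → ℝ) (hf : IsTruncRBKOn θ n (Set.Ici 0) f)
    (hinit : ∀ i ∈ Finset.Icc 1 n, f i 0 = fin i)
    (hf_nonneg : ∀ i ∈ Finset.Icc 1 n, ∀ t ∈ Set.Ici (0:ℝ), 0 ≤ f i t)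
    (t : ℝ) (ht : 0 < t) :
    ∑ i ∈ Finset.Icc 1 n, (i : ℝ) * f i t
      ≤ (2 / R) * Real.sqrt (∑ i ∈ Finset.Icc 1 n, fin i) * (Real.sqrt t)⁻¹ :=
  truncRBK_mass_decay_general θ ω κ hθ_symm hK1 hκ_nonneg R hR hωR n fin f hf hinit hf_nonneg t ht
end

section
/- Let (θ_{i,j})_{i,j≥1} be a coagulation kernel satisfying (K1) and the bound κ_{i,j} ≤ A ω_i ω_j for all i,j ≥ 1 and some A > 0. Let f^{in} = (f_i^{in})_{i≥1} ∈ X_1^+, let n ≥ 2, and let f^n be the nonnegative global solution of the truncated RBK system with initial data f_i^n(0) = f_i^{in} for 1 ≤ i ≤ n. Then for every i ≥ 1, every T ∈ (0,∞), and all 1 ≤ r1 ≤ r2 ≤ n, ∫_0^T ( Σ_{j=r1}^{r2} θ_{i,j} f_j^n(s) )^2 ds ≤ 2(1+A)^2 ω_i^2 r1^{−1/2} ‖f^{in}‖_1. -/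
/-!
Along the truncated system the first moment `M(t) = ∑_{k ≤ n} k f_k(t)` satisfies `M' = -D` with
`D = ∑_{k,j ≤ n} min(k,j) θ_{k,j} f_k f_j ≥ 0`, so `∫_0^T D ≤ M(0) ≤ ‖f^{in}‖₁`.
With `S = ∑_{j=r1}^{r2} ω_j f_j`, the kernel bounds `ω_k ω_j ≤ θ_{k,j} ≤ (1+A) ω_k ω_j` give
`(∑_{j=r1}^{r2} θ_{i,j} f_j)² ≤ (1+A)² ω_i² S²`, and `r1 S² ≤ D` because `min(k,j) ≥ r1` on the
block `[r1, r2]²`. Integrating gives the estimate with `r1⁻¹` in place of `2 r1^{-1/2}`.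
-/

open MeasureTheory Finset Filter

namespace TruncRBK

def moment (n : ℕ) (g : ℕ → ℝ) : ℝ := ∑ k ∈ Icc 1 n, (k : ℝ) * g k

def dissipation (θ : ℕ → ℕ → ℝ) (n : ℕ) (g : ℕ → ℝ) : ℝ :=
  ∑ k ∈ Icc 1 n, ∑ j ∈ Icc 1 n, (min k j : ℕ) * (θ k j * g k * g j)

lemma sum_mul_gain_eq (n : ℕ) (a : ℕ → ℕ → ℝ) :
    ∑ k ∈ Icc 1 n, ∑ j ∈ Icc 1 (n - k), (k : ℝ) * a (k + j) j
      = ∑ p ∈ Icc 1 n, ∑ j ∈ Icc 1 (p - 1), ((p : ℝ) - j) * a p j := by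
  rw [sum_sigma', sum_sigma']
  refine sum_nbij' (fun x => ⟨x.1 + x.2, x.2⟩) (fun x => ⟨x.1 - x.2, x.2⟩) ?_ ?_ ?_ ?_ ?_
  all_goals
    rintro ⟨k, j⟩ h
    simp only [mem_sigma, mem_Icc] at h
  · simp only [mem_sigma, mem_Icc]; omega
  · simp only [mem_sigma, mem_Icc]; omega
  · simp only [Sigma.mk.inj_iff, heq_eq_eq, and_true]; omega
  · simp only [Sigma.mk.inj_iff, heq_eq_eq, and_true]; omega
  · push_cast; ring

lemma sum_Icc_pred_eq_sum_sub_min (n : ℕ) (a : ℕ → ℕ → ℝ) {p : ℕ} (hp : p ≤ n) :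
    ∑ j ∈ Icc 1 (p - 1), ((p : ℝ) - j) * a p j
      = ∑ j ∈ Icc 1 n, ((p : ℝ) - (min p j : ℕ)) * a p j := by
  refine sum_subset_zero_on_sdiff (Icc_subset_Icc_right (by omega)) ?_ ?_
  · intro j hj
    rw [Finset.mem_sdiff, mem_Icc, mem_Icc] at hj
    rw [min_eq_left (by omega), sub_self, zero_mul]
  · intro j hj
    rw [mem_Icc] at hj
    rw [min_eq_right (by omega)]

theorem sum_mul_gain_sub_loss (n : ℕ) (a : ℕ → ℕ → ℝ) :
    ∑ k ∈ Icc 1 n, (k : ℝ) * ((∑ j ∈ Icc 1 (n - k), a (k + j) j) - ∑ j ∈ Icc 1 n, a k j)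
      = -∑ k ∈ Icc 1 n, ∑ j ∈ Icc 1 n, (min k j : ℕ) * a k j := by
  simp only [mul_sub, mul_sum, sum_sub_distrib, sum_mul_gain_eq]
  rw [sum_congr rfl fun p hp => sum_Icc_pred_eq_sum_sub_min n a (mem_Icc.1 hp).2,
    ← sum_neg_distrib, ← sum_sub_distrib]
  refine sum_congr rfl fun k _ => ?_
  rw [← sum_neg_distrib, ← sum_sub_distrib]
  exact sum_congr rfl fun j _ => by ring

lemma moment_nonneg {n : ℕ} {g : ℕ → ℝ} (hg : ∀ k ∈ Icc 1 n, 0 ≤ g k) : 0 ≤ moment n g :=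
  sum_nonneg fun k hk => mul_nonneg k.cast_nonneg (hg k hk)

lemma moment_le_tsum (n : ℕ) {g : ℕ → ℝ} (hg : ∀ k, 1 ≤ k → 0 ≤ g k)
    (hsum : Summable fun k : ℕ => (k : ℝ) * g k) : moment n g ≤ ∑' k : ℕ, (k : ℝ) * g k := by
  refine hsum.sum_le_tsum _ fun k _ => ?_
  rcases Nat.eq_zero_or_pos k with rfl | hk
  · simp
  · exact mul_nonneg k.cast_nonneg (hg k hk)

section KernelBounds

variable {θ : ℕ → ℕ → ℝ} {ω : ℕ → ℝ} {n : ℕ} {g : ℕ → ℝ} {r1 r2 : ℕ}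

lemma natCast_mul_sq_le_dissipation (hω : ∀ k, 1 ≤ k → 0 ≤ ω k)
    (hθ_lower : ∀ k j, 1 ≤ k → 1 ≤ j → ω k * ω j ≤ θ k j) (hg : ∀ k ∈ Icc 1 n, 0 ≤ g k)
    (hr1 : 1 ≤ r1) (hr2n : r2 ≤ n) :
    r1 * (∑ j ∈ Icc r1 r2, ω j * g j) ^ 2 ≤ dissipation θ n g := by
  have hsub : Icc r1 r2 ⊆ Icc 1 n := Icc_subset_Icc hr1 hr2n
  have hterm : ∀ k ∈ Icc 1 n, ∀ j ∈ Icc 1 n, 0 ≤ (min k j : ℕ) * (θ k j * g k * g j) := by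
    intro k hk j hj
    have hk1 := (mem_Icc.1 hk).1
    have hj1 := (mem_Icc.1 hj).1
    have := (mul_nonneg (hω k hk1) (hω j hj1)).trans (hθ_lower k j hk1 hj1)
    have := hg k hk
    have := hg j hj
    positivity
  calc (r1 : ℝ) * (∑ j ∈ Icc r1 r2, ω j * g j) ^ 2
      = ∑ k ∈ Icc r1 r2, ∑ j ∈ Icc r1 r2, (r1 : ℝ) * (ω k * ω j) * (g k * g j) := by
        rw [sq, sum_mul_sum, mul_sum]
        exact sum_congr rfl fun k _ => by rw [mul_sum]; exact sum_congr rfl fun j _ => by ring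
    _ ≤ ∑ k ∈ Icc r1 r2, ∑ j ∈ Icc r1 r2, (min k j : ℕ) * (θ k j * g k * g j) := by
        refine sum_le_sum fun k hk => sum_le_sum fun j hj => ?_
        have hk' := mem_Icc.1 hk
        have hj' := mem_Icc.1 hj
        have hmin : (r1 : ℝ) ≤ (min k j : ℕ) := by exact_mod_cast le_min hk'.1 hj'.1
        have hgkj := mul_nonneg (hg k (hsub hk)) (hg j (hsub hj))
        calc (r1 : ℝ) * (ω k * ω j) * (g k * g j) ≤ (min k j : ℕ) * θ k j * (g k * g j) := by
              gcongr
              · exact mul_nonneg (hω k (by omega)) (hω j (by omega))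
              · exact hθ_lower k j (by omega) (by omega)
          _ = (min k j : ℕ) * (θ k j * g k * g j) := by ring
    _ ≤ dissipation θ n g := by
        rw [dissipation, ← sum_product', ← sum_product']
        exact sum_le_sum_of_subset_of_nonneg (product_subset_product hsub hsub)
          fun x hx _ => hterm x.1 (mem_product.1 hx).1 x.2 (mem_product.1 hx).2

lemma sq_sum_kernel_mul_le {C : ℝ} {i : ℕ} (hω : ∀ k, 1 ≤ k → 0 ≤ ω k)
    (hθ_lower : ∀ k j, 1 ≤ k → 1 ≤ j → ω k * ω j ≤ θ k j)
    (hθ_upper : ∀ k j, 1 ≤ k → 1 ≤ j → θ k j ≤ C * (ω k * ω j))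
    (hg : ∀ k ∈ Icc 1 n, 0 ≤ g k) (hi : 1 ≤ i) (hr1 : 1 ≤ r1) (hr2n : r2 ≤ n) :
    (∑ j ∈ Icc r1 r2, θ i j * g j) ^ 2 ≤ C ^ 2 * ω i ^ 2 * (r1 : ℝ)⁻¹ * dissipation θ n g := by
  have hsub : Icc r1 r2 ⊆ Icc 1 n := Icc_subset_Icc hr1 hr2n
  have hr1pos : (0 : ℝ) < r1 := by exact_mod_cast hr1
  have hθ_nonneg : ∀ j ∈ Icc r1 r2, 0 ≤ θ i j := fun j hj =>
    (mul_nonneg (hω i hi) (hω j (by grind))).trans (hθ_lower i j hi (by grind))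
  have hsum_nonneg : 0 ≤ ∑ j ∈ Icc r1 r2, θ i j * g j :=
    sum_nonneg fun j hj => mul_nonneg (hθ_nonneg j hj) (hg j (hsub hj))
  have hsum_le : ∑ j ∈ Icc r1 r2, θ i j * g j ≤ C * ω i * ∑ j ∈ Icc r1 r2, ω j * g j := by
    rw [mul_sum]
    refine sum_le_sum fun j hj => ?_
    calc θ i j * g j ≤ C * (ω i * ω j) * g j :=
          mul_le_mul_of_nonneg_right (hθ_upper i j hi (by grind)) (hg j (hsub hj))
      _ = C * ω i * (ω j * g j) := by ring
  calc (∑ j ∈ Icc r1 r2, θ i j * g j) ^ 2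
      ≤ (C * ω i * ∑ j ∈ Icc r1 r2, ω j * g j) ^ 2 := pow_le_pow_left₀ hsum_nonneg hsum_le 2
    _ = C ^ 2 * ω i ^ 2 * (r1 : ℝ)⁻¹ * (r1 * (∑ j ∈ Icc r1 r2, ω j * g j) ^ 2) := by
        field_simp
    _ ≤ C ^ 2 * ω i ^ 2 * (r1 : ℝ)⁻¹ * dissipation θ n g := by
        gcongr
        exact natCast_mul_sq_le_dissipation hω hθ_lower hg hr1 hr2n

end KernelBounds

end TruncRBK

namespace IsTruncRBKOn

open TruncRBK

variable {θ : ℕ → ℕ → ℝ} {n : ℕ} {f : ℕ → ℝ → ℝ}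

lemma continuousOn {I : Set ℝ} (hf : IsTruncRBKOn θ n I f) {k : ℕ} (hk : k ∈ Icc 1 n) :
    ContinuousOn (f k) I :=
  fun t ht => (hf k hk t ht).continuousWithinAt

lemma continuousOn_dissipation {I : Set ℝ} (hf : IsTruncRBKOn θ n I f) :
    ContinuousOn (fun t => dissipation θ n (f · t)) I :=
  continuousOn_finsetSum _ fun _ hk => continuousOn_finsetSum _ fun _ hj =>
    continuousOn_const.mul ((continuousOn_const.mul (hf.continuousOn hk)).mul (hf.continuousOn hj))

lemma hasDerivWithinAt_moment {I : Set ℝ} (hf : IsTruncRBKOn θ n I f) {t : ℝ} (ht : t ∈ I) :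
    HasDerivWithinAt (fun s => moment n (f · s)) (-dissipation θ n (f · t)) I t := by
  have := HasDerivWithinAt.fun_sum fun k hk => (hf k hk t ht).const_mul (k : ℝ)
  rwa [sum_mul_gain_sub_loss n fun k j => θ k j * f k t * f j t] at this

theorem integral_dissipation (hf : IsTruncRBKOn θ n (Set.Ici 0) f) {T : ℝ} (hT : 0 ≤ T) :
    ∫ s in (0 : ℝ)..T, dissipation θ n (f · s) = moment n (f · 0) - moment n (f · T) := by
  have hD : ContinuousOn (fun t => dissipation θ n (f · t)) (Set.uIcc 0 T) :=
    hf.continuousOn_dissipation.mono (by simp [Set.uIcc_of_le hT, Set.Icc_subset_Ici_self])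
  have hM : ContinuousOn (fun s => moment n (f · s)) (Set.Icc 0 T) :=
    fun t ht => (hf.hasDerivWithinAt_moment ht.1).continuousWithinAt.mono Set.Icc_subset_Ici_self
  have hFTC := intervalIntegral.integral_eq_sub_of_hasDeriv_right_of_le hT hM
    (fun t ht => (hf.hasDerivWithinAt_moment (le_of_lt ht.1)).mono
      fun s hs => le_trans ht.1.le (le_of_lt hs)) hD.intervalIntegrable.neg
  rw [intervalIntegral.integral_neg] at hFTC
  linarith

theorem integral_sq_sum_kernel_mul_le {ω : ℕ → ℝ} {C : ℝ} {i r1 r2 : ℕ} {T : ℝ}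
    (hf : IsTruncRBKOn θ n (Set.Ici 0) f) (hf_nonneg : ∀ k ∈ Icc 1 n, ∀ t ≥ 0, 0 ≤ f k t)
    (hω : ∀ k, 1 ≤ k → 0 ≤ ω k) (hθ_lower : ∀ k j, 1 ≤ k → 1 ≤ j → ω k * ω j ≤ θ k j)
    (hθ_upper : ∀ k j, 1 ≤ k → 1 ≤ j → θ k j ≤ C * (ω k * ω j))
    (hi : 1 ≤ i) (hr1 : 1 ≤ r1) (hr2n : r2 ≤ n) (hT : 0 ≤ T) :
    ∫ s in (0 : ℝ)..T, (∑ j ∈ Icc r1 r2, θ i j * f j s) ^ 2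
      ≤ C ^ 2 * ω i ^ 2 * (r1 : ℝ)⁻¹ * moment n (f · 0) := by
  set K := C ^ 2 * ω i ^ 2 * (r1 : ℝ)⁻¹
  have hIcc : Set.uIcc 0 T ⊆ Set.Ici 0 := by simp [Set.uIcc_of_le hT, Set.Icc_subset_Ici_self]
  have hG : IntervalIntegrable (fun s => (∑ j ∈ Icc r1 r2, θ i j * f j s) ^ 2) volume 0 T :=
    ContinuousOn.intervalIntegrable <| ContinuousOn.pow (continuousOn_finsetSum _ fun _ hj =>
      continuousOn_const.mul (hf.continuousOn (Icc_subset_Icc hr1 hr2n hj) |>.mono hIcc)) 2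
  have hD := (hf.continuousOn_dissipation.mono hIcc).intervalIntegrable (μ := volume)
  calc ∫ s in (0 : ℝ)..T, (∑ j ∈ Icc r1 r2, θ i j * f j s) ^ 2
      ≤ ∫ s in (0 : ℝ)..T, K * dissipation θ n (f · s) :=
        intervalIntegral.integral_mono_on hT hG (hD.const_mul K) fun s hs =>
          sq_sum_kernel_mul_le hω hθ_lower hθ_upper (fun k hk => hf_nonneg k hk s hs.1) hi hr1 hr2n
    _ = K * (moment n (f · 0) - moment n (f · T)) := by
        rw [intervalIntegral.integral_const_mul, hf.integral_dissipation hT]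
    _ ≤ K * moment n (f · 0) := by
        have := moment_nonneg fun k hk => hf_nonneg k hk T hT
        gcongr
        linarith

end IsTruncRBKOn

open TruncRBK in
theorem truncRBK_L2_kernel_estimate_general
    (θ : ℕ → ℕ → ℝ) (ω : ℕ → ℝ) (κ : ℕ → ℕ → ℝ)
    -- (K1)
    (hK1 : ∀ i j : ℕ, 1 ≤ i → 1 ≤ j → θ i j = ω i * ω j + κ i j)
    (hω_nonneg : ∀ i : ℕ, 1 ≤ i → 0 ≤ ω i)
    (hκ_nonneg : ∀ i j : ℕ, 1 ≤ i → 1 ≤ j → 0 ≤ κ i j)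
    (A : ℝ)
    (hκA : ∀ i j : ℕ, 1 ≤ i → 1 ≤ j → κ i j ≤ A * (ω i * ω j))
    -- f^{in} ∈ X₁⁺
    (fin : ℕ → ℝ) (hfin_nonneg : ∀ i : ℕ, 1 ≤ i → 0 ≤ fin i)
    (hfin_summable : Summable (fun i : ℕ => (i : ℝ) * fin i))
    (n : ℕ)
    (f : ℕ → ℝ → ℝ) (hf : IsTruncRBKOn θ n (Set.Ici 0) f)
    (hinit : ∀ i ∈ Finset.Icc 1 n, f i 0 = fin i)
    (hf_nonneg : ∀ i ∈ Finset.Icc 1 n, ∀ t ∈ Set.Ici (0:ℝ), 0 ≤ f i t)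
    (i : ℕ) (hi : 1 ≤ i) (T : ℝ) (hT : 0 < T)
    (r1 r2 : ℕ) (hr1 : 1 ≤ r1) (hr2n : r2 ≤ n) :
    ∫ s in (0:ℝ)..T, (∑ j ∈ Finset.Icc r1 r2, θ i j * f j s) ^ 2
      ≤ 2 * (1 + A) ^ 2 * (ω i) ^ 2 * (Real.sqrt r1)⁻¹ * ∑' i : ℕ, (i : ℝ) * fin i := by
  have hθ_lower : ∀ k j, 1 ≤ k → 1 ≤ j → ω k * ω j ≤ θ k j := fun k j hk hj => by
    linarith [hK1 k j hk hj, hκ_nonneg k j hk hj]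
  have hθ_upper : ∀ k j, 1 ≤ k → 1 ≤ j → θ k j ≤ (1 + A) * (ω k * ω j) := fun k j hk hj => by
    linarith [hK1 k j hk hj, hκA k j hk hj]
  have hmoment : moment n (f · 0) = moment n fin :=
    sum_congr rfl fun k hk => congrArg ((k : ℝ) * ·) (hinit k hk)
  have hr1_inv : (r1 : ℝ)⁻¹ ≤ 2 * (Real.sqrt r1)⁻¹ := by
    have hr1' : (1 : ℝ) ≤ r1 := by exact_mod_cast hr1
    have hsqrt : Real.sqrt r1 ≤ r1 := Real.sqrt_le_self_iff.2 (Or.inr hr1')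
    calc (r1 : ℝ)⁻¹ ≤ (Real.sqrt r1)⁻¹ := inv_anti₀ (by positivity) hsqrt
      _ ≤ 2 * (Real.sqrt r1)⁻¹ := le_mul_of_one_le_left (by positivity) one_le_two
  calc ∫ s in (0:ℝ)..T, (∑ j ∈ Finset.Icc r1 r2, θ i j * f j s) ^ 2
      ≤ (1 + A) ^ 2 * ω i ^ 2 * (r1 : ℝ)⁻¹ * moment n fin :=
        hmoment ▸ hf.integral_sq_sum_kernel_mul_le hf_nonneg hω_nonneg hθ_lower hθ_upper
          hi hr1 hr2n hT.le
    _ ≤ (1 + A) ^ 2 * ω i ^ 2 * (2 * (Real.sqrt r1)⁻¹) * ∑' i : ℕ, (i : ℝ) * fin i := by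
        have := moment_nonneg (n := n) fun k hk => hfin_nonneg k (mem_Icc.1 hk).1
        gcongr
        exact moment_le_tsum n hfin_nonneg hfin_summable
    _ = 2 * (1 + A) ^ 2 * (ω i) ^ 2 * (Real.sqrt r1)⁻¹ * ∑' i : ℕ, (i : ℝ) * fin i := by ring

/-- Under (K1) with `κ_{i,j} ≤ A ω_i ω_j`, if `f^{in} ∈ X₁⁺` and `f^n` is
the nonnegative global solution of the truncated RBK system with initial data
`f_i^n(0) = f_i^{in}` for `1 ≤ i ≤ n`, then for every `i ≥ 1`, `T > 0` and `1 ≤ r1 ≤ r2 ≤ n`,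
`∫_0^T (∑_{j=r1}^{r2} θ_{i,j} f_j^n(s))² ds ≤ 2 (1+A)² ω_i² r1^{−1/2} ‖f^{in}‖₁`. -/
theorem truncRBK_L2_kernel_estimate
    (θ : ℕ → ℕ → ℝ) (ω : ℕ → ℝ) (κ : ℕ → ℕ → ℝ)
    (hθ_symm : ∀ i j : ℕ, 1 ≤ i → 1 ≤ j → θ i j = θ j i)
    -- (K1)
    (hK1 : ∀ i j : ℕ, 1 ≤ i → 1 ≤ j → θ i j = ω i * ω j + κ i j)
    (hω_nonneg : ∀ i : ℕ, 1 ≤ i → 0 ≤ ω i)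
    (hκ_nonneg : ∀ i j : ℕ, 1 ≤ i → 1 ≤ j → 0 ≤ κ i j)
    (hκ_symm : ∀ i j : ℕ, 1 ≤ i → 1 ≤ j → κ i j = κ j i)
    (A : ℝ) (hA : 0 < A)
    (hκA : ∀ i j : ℕ, 1 ≤ i → 1 ≤ j → κ i j ≤ A * (ω i * ω j))
    -- f^{in} ∈ X₁⁺
    (fin : ℕ → ℝ) (hfin_nonneg : ∀ i : ℕ, 1 ≤ i → 0 ≤ fin i)
    (hfin_summable : Summable (fun i : ℕ => (i : ℝ) * fin i))
    (n : ℕ) (hn : 2 ≤ n)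
    (f : ℕ → ℝ → ℝ) (hf : IsTruncRBKOn θ n (Set.Ici 0) f)
    (hinit : ∀ i ∈ Finset.Icc 1 n, f i 0 = fin i)
    (hf_nonneg : ∀ i ∈ Finset.Icc 1 n, ∀ t ∈ Set.Ici (0:ℝ), 0 ≤ f i t)
    (i : ℕ) (hi : 1 ≤ i) (T : ℝ) (hT : 0 < T)
    (r1 r2 : ℕ) (hr1 : 1 ≤ r1) (hr12 : r1 ≤ r2) (hr2n : r2 ≤ n) :
    ∫ s in (0:ℝ)..T, (∑ j ∈ Finset.Icc r1 r2, θ i j * f j s) ^ 2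
      ≤ 2 * (1 + A) ^ 2 * (ω i) ^ 2 * (Real.sqrt r1)⁻¹ * ∑' i : ℕ, (i : ℝ) * fin i :=
  truncRBK_L2_kernel_estimate_general θ ω κ hK1 hω_nonneg hκ_nonneg A hκA fin hfin_nonneg
    hfin_summable n f hf hinit hf_nonneg i hi T hT r1 r2 hr1 hr2n
end
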